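/- Let c₁, c₂ ∈ ℝ with c₁c₂ ≠ 0 and c₁/c₂ irrational, and let q ∈ ℍ with q ∉ ℍ_{1,i} ∪ ℍ_{j,k}. Then the closed convex cone in the real vector space ℍ generated by the curve {exp(t c₁ i) · q · exp(−t c₂ i) : t ∈ ℝ} is all of ℍ. -/

import Mathlib

open Quaternion

noncomputable section

def qi : ℍ[ℝ] := ⟨0, 1, 0, 0⟩
def qj : ℍ[ℝ] := ⟨0, 0, 1, 0⟩
def qk : ℍ[ℝ] := ⟨0, 0, 0, 1⟩

/-- the real subspace `ℍ_{1,i}` of `ℍ` spanned by `{1, i}` -/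
def H1i : Submodule ℝ ℍ[ℝ] := Submodule.span ℝ {1, qi}

/-- the real subspace `ℍ_{j,k}` of `ℍ` spanned by `{j, k}` -/
def Hjk : Submodule ℝ ℍ[ℝ] := Submodule.span ℝ {qj, qk}

/-- the quaternionic exponential `exp (t i) = cos t + (sin t) i` -/
noncomputable def qexp (t : ℝ) : ℍ[ℝ] := NormedSpace.exp (t • qi)

/-- the smallest convex cone in `ℍ` (as a real vector space) containing `S`:
the intersection of all convex cones containing `S`. -/
def coneGen (S : Set ℍ[ℝ]) : Set ℍ[ℝ] :=
  ⋂ K ∈ {K : ConvexCone ℝ ℍ[ℝ] | S ⊆ ↑K}, (K : Set ℍ[ℝ])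

/-!
Write `q = z + w j` with `z, w ∈ ℍ_{1,i} ≅ ℂ`. Then
`exp(t c₁ i) q exp(-t c₂ i) = e^{iαt} z + e^{iβt} w j` with `α = c₁ - c₂`, `β = c₁ + c₂`,
and `β / α = (c₁/c₂ + 1) / (c₁/c₂ - 1)` is irrational. If the closed cone were not all of `ℍ`,
Farkas' lemma would give `y ≠ 0` with `⟪x, y⟫ ≥ 0` along the curve, i.e. a nonnegative
trigonometric polynomial `P cos αt + Q sin αt + R cos βt + S sin βt`. Translating `t` by `π / α`
flips the sign of the `α`-part and rotates the `β`-part by the angle `π β / α`, which is not an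
odd multiple of `π`; adding the two inequalities leaves a nonnegative pure `β`-wave, which must
vanish, and then so does the `α`-part. As `z, w ≠ 0`, this forces `y = 0`.
-/

open Real Set
open scoped RealInnerProductSpace

theorem Irrational.add_one_div_sub_one {r : ℝ} (h : Irrational r) :
    Irrational ((r + 1) / (r - 1)) := by
  have hr : r - 1 ≠ 0 := sub_ne_zero.2 h.ne_one
  have key :
      (r + 1) / (r - 1) = ((1 : ℤ) : ℝ) + ((2 : ℤ) : ℝ) * (r - ((1 : ℤ) : ℝ))⁻¹ := by
    push_cast
    field_simp
    ring
  rw [key]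
  exact ((h.sub_intCast 1).inv.intCast_mul two_ne_zero).intCast_add 1

theorem Irrational.cos_mul_pi_ne_neg_one {r : ℝ} (h : Irrational r) : cos (r * π) ≠ -1 := by
  rw [Ne, cos_eq_neg_one_iff]
  rintro ⟨k, hk⟩
  refine h.ne_int (2 * k + 1) ?_
  push_cast
  nlinarith [pi_pos]

lemma eq_zero_of_mul_add_mul_eq_zero {a b x y : ℝ} (hab : ¬(a = 0 ∧ b = 0))
    (h₁ : a * x + b * y = 0) (h₂ : a * y - b * x = 0) : x = 0 ∧ y = 0 := by
  have hpos : a ^ 2 + b ^ 2 ≠ 0 := fun h => hab ⟨by nlinarith, by nlinarith⟩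
  have hx : (a ^ 2 + b ^ 2) * x = 0 := by linear_combination a * h₁ - b * h₂
  have hy : (a ^ 2 + b ^ 2) * y = 0 := by linear_combination b * h₁ + a * h₂
  exact ⟨(mul_eq_zero.1 hx).resolve_left hpos, (mul_eq_zero.1 hy).resolve_left hpos⟩

lemma eq_zero_of_forall_nonneg_cos_sin {β R S : ℝ} (hβ : β ≠ 0)
    (h : ∀ t, 0 ≤ R * cos (β * t) + S * sin (β * t)) : R = 0 ∧ S = 0 := by
  have hzero : ∀ t, R * cos (β * t) + S * sin (β * t) = 0 := fun t => by
    have hshift := h (t + π / β)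
    rw [mul_add, mul_div_cancel₀ _ hβ, cos_add_pi, sin_add_pi] at hshift
    linarith [h t]
  have h₀ := hzero 0
  have h₁ := hzero (π / 2 / β)
  rw [mul_div_cancel₀ _ hβ, cos_pi_div_two, sin_pi_div_two] at h₁
  simp only [mul_zero, cos_zero, sin_zero] at h₀
  constructor <;> linarith

lemma eq_zero_of_forall_nonneg_two_freq {α β P Q R S : ℝ} (hβα : Irrational (β / α))
    (h : ∀ t, 0 ≤ P * cos (α * t) + Q * sin (α * t) + R * cos (β * t) + S * sin (β * t)) :
    P = 0 ∧ Q = 0 ∧ R = 0 ∧ S = 0 := by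
  have hα : α ≠ 0 := by rintro rfl; simp at hβα
  have hβ : β ≠ 0 := by rintro rfl; simp at hβα
  set c := cos (β / α * π)
  set s := sin (β / α * π)
  have hβpart : ∀ t,
      0 ≤ (R * (1 + c) + S * s) * cos (β * t) + (S * (1 + c) - R * s) * sin (β * t) := by
    intro t
    have hshift := h (t + π / α)
    rw [mul_add, mul_div_cancel₀ _ hα, cos_add_pi, sin_add_pi,
      show β * (t + π / α) = β * t + β / α * π by ring, cos_add, sin_add] at hshift
    linarith [h t]
  have hcs : ¬(1 + c = 0 ∧ s = 0) := fun h => hβα.cos_mul_pi_ne_neg_one (by linarith [h.1])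
  obtain ⟨h₁, h₂⟩ := eq_zero_of_forall_nonneg_cos_sin hβ hβpart
  obtain ⟨rfl, rfl⟩ := eq_zero_of_mul_add_mul_eq_zero (x := R) (y := S) hcs
    (by linear_combination h₁) (by linear_combination h₂)
  obtain ⟨rfl, rfl⟩ := eq_zero_of_forall_nonneg_cos_sin hα (by simpa using h)
  exact ⟨rfl, rfl, rfl, rfl⟩

theorem ConvexCone.closure_hull_eq_univ {E : Type*} [NormedAddCommGroup E]
    [InnerProductSpace ℝ E] [CompleteSpace E] {S : Set E} (hS : S.Nonempty)
    (h : ∀ y, (∀ x ∈ S, 0 ≤ ⟪x, y⟫) → y = 0) : closure (hull ℝ S : Set E) = univ := by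
  refine eq_univ_of_forall fun b => by_contra fun hb => ?_
  lift (hull ℝ S).closure to ProperCone ℝ E using
    ⟨hS.mono (subset_hull.trans subset_closure), isClosed_closure⟩ with C hC
  have hCset : (C : Set E) = closure (hull ℝ S : Set E) := congrArg SetLike.coe hC
  obtain ⟨y, hyC, hyb⟩ := C.hyperplane_separation' (x₀ := b) (by rwa [← SetLike.mem_coe, hCset])
  obtain rfl := h y fun x hx => hyC x <| by
    rw [← SetLike.mem_coe, hCset]
    exact subset_closure (subset_hull hx)
  simp at hyb

lemma coneGen_eq_hull (S : Set ℍ[ℝ]) : coneGen S = ConvexCone.hull ℝ S := rfl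

@[simp] lemma qi_re : qi.re = 0 := rfl
@[simp] lemma qi_imI : qi.imI = 1 := rfl
@[simp] lemma qi_imJ : qi.imJ = 0 := rfl
@[simp] lemma qi_imK : qi.imK = 0 := rfl

lemma norm_qi : ‖qi‖ = 1 := by
  rw [norm_eq_sqrt_real_inner, inner_self]
  simp [normSq_def']

lemma qexp_eq (t : ℝ) : qexp t = ↑(cos t) + sin t • qi := by
  rw [qexp, exp_of_re_eq_zero _ (by simp), norm_smul, norm_qi, mul_one, norm_eq_abs, cos_abs,
    smul_smul]
  congr 2
  rcases abs_cases t with ⟨h, -⟩ | ⟨h, -⟩ <;> simp only [h, sin_neg, neg_div_neg_eq] <;>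
    exact div_mul_cancel_of_imp (by simp +contextual)

@[simp] lemma re_qexp (t : ℝ) : (qexp t).re = cos t := by simp [qexp_eq]
@[simp] lemma imI_qexp (t : ℝ) : (qexp t).imI = sin t := by simp [qexp_eq]
@[simp] lemma imJ_qexp (t : ℝ) : (qexp t).imJ = 0 := by simp [qexp_eq]
@[simp] lemma imK_qexp (t : ℝ) : (qexp t).imK = 0 := by simp [qexp_eq]

lemma inner_qexp_mul_mul_qexp_neg (s r : ℝ) (q y : ℍ[ℝ]) :
    ⟪qexp s * q * qexp (-r), y⟫ =
      (q.re * y.re + q.imI * y.imI) * cos (s - r) + (q.re * y.imI - q.imI * y.re) * sin (s - r) +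
      (q.imJ * y.imJ + q.imK * y.imK) * cos (s + r) +
      (q.imJ * y.imK - q.imK * y.imJ) * sin (s + r) := by
  simp only [inner_def, re_mul, imI_mul, imJ_mul, imK_mul, re_star, imI_star, imJ_star, imK_star,
    re_qexp, imI_qexp, imJ_qexp, imK_qexp, cos_sub, sin_sub, cos_add, sin_add, cos_neg, sin_neg]
  ring

lemma mem_H1i {q : ℍ[ℝ]} : q ∈ H1i ↔ q.imJ = 0 ∧ q.imK = 0 := by
  rw [H1i, Submodule.mem_span_pair]
  constructor
  · rintro ⟨a, b, rfl⟩
    simp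
  · rintro ⟨hJ, hK⟩
    exact ⟨q.re, q.imI, by ext <;> simp [hJ, hK]⟩

lemma mem_Hjk {q : ℍ[ℝ]} : q ∈ Hjk ↔ q.re = 0 ∧ q.imI = 0 := by
  rw [Hjk, Submodule.mem_span_pair]
  constructor
  · rintro ⟨a, b, rfl⟩
    simp only [re_add, imI_add, re_smul, imI_smul]
    exact ⟨by simp [qj, qk], by simp [qj, qk]⟩
  · rintro ⟨hr, hI⟩
    refine ⟨q.imJ, q.imK, ?_⟩
    ext <;> simp only [re_add, imI_add, imJ_add, imK_add, re_smul, imI_smul, imJ_smul, imK_smul] <;>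
      simp [qj, qk, hr, hI]

theorem stmt6_general (c₁ c₂ : ℝ) (hirr : Irrational (c₁ / c₂))
    (q : ℍ[ℝ]) (hq : q ∉ (H1i : Set ℍ[ℝ]) ∪ (Hjk : Set ℍ[ℝ])) :
    closure (coneGen {x : ℍ[ℝ] | ∃ t : ℝ, x = qexp (t * c₁) * q * qexp (-(t * c₂))}) =
      Set.univ := by
  have hc₂ : c₂ ≠ 0 := by rintro rfl; simp at hirr
  have hfreq : Irrational ((c₁ + c₂) / (c₁ - c₂)) := by
    convert hirr.add_one_div_sub_one using 1
    field_simp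
  rw [coneGen_eq_hull]
  refine ConvexCone.closure_hull_eq_univ ⟨q, 0, by simp [qexp]⟩ fun y hy => ?_
  obtain ⟨hP, hQ, hR, hS⟩ := eq_zero_of_forall_nonneg_two_freq hfreq fun t => by
    have hyt := hy _ ⟨t, rfl⟩
    rwa [inner_qexp_mul_mul_qexp_neg, ← mul_sub, ← mul_add, mul_comm t, mul_comm t] at hyt
  obtain ⟨hre, himI⟩ :=
    eq_zero_of_mul_add_mul_eq_zero (fun h => hq (Or.inr (mem_Hjk.2 h))) hP hQ
  obtain ⟨himJ, himK⟩ :=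
    eq_zero_of_mul_add_mul_eq_zero (fun h => hq (Or.inl (mem_H1i.2 h))) hR hS
  ext <;> assumption

/-- if `c₁ c₂ ≠ 0`, `c₁/c₂` is irrational and `q ∉ ℍ_{1,i} ∪ ℍ_{j,k}`, then the
closed convex cone generated by the curve `{exp(t c₁ i) q exp(-t c₂ i) : t ∈ ℝ}` is all of `ℍ`. -/
theorem stmt6 (c₁ c₂ : ℝ) (hc : c₁ * c₂ ≠ 0) (hirr : Irrational (c₁ / c₂))
    (q : ℍ[ℝ]) (hq : q ∉ (H1i : Set ℍ[ℝ]) ∪ (Hjk : Set ℍ[ℝ])) :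
    closure (coneGen {x : ℍ[ℝ] | ∃ t : ℝ, x = qexp (t * c₁) * q * qexp (-(t * c₂))}) =
      Set.univ :=
  stmt6_general c₁ c₂ hirr q hq
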